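/- Let X = Q^{2n−1} ≅ Spin(2n+1)/P₁ (n ≥ 2) be an odd-dimensional smooth hyperquadric, and let λ₁,…,λ_n be the fundamental dominant weights of the simple Lie algebra of type B_n. If λ = Σ_{i=1}^n a_i λ_i is the highest weight of an irreducible component of T_X^{⊗r}, then a₁ = r − Σ_{i=2}^{n−1} a_i − (1/2) a_n. -/
import Mathlib


/-!
Statement 13 (Lemma `oddQ`).  Let `X = Q^{2n−1} ≅ Spin(2n+1)/P₁` (`n ≥ 2`) be an
odd-dimensional smooth hyperquadric and `λ₁,…,λ_n` the fundamental dominant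
weights of the simple Lie algebra of type `B_n`.  If `λ = Σ_{i=1}^n a_i λ_i` is
the highest weight of an irreducible component of `T_X^{⊗r}`, then
`a₁ = r − Σ_{i=2}^{n−1} a_i − a_n/2`.

We formalize this concretely.  Weights of `B_n` are written in coordinates with
respect to `λ₁,…,λ_n`, i.e. as functions `ℕ → ℚ` supported on `{1,…,n}`.  The
tangent bundle `T_X` has the `2n−1` weights `τ₁,…,τ_{2n−1}` listed in the paper,
each of multiplicity one; a highest weight `λ` of an irreducible component of
`T_X^{⊗r}` is in particular a weight of `T_X^{⊗r}`, i.e. a sum `λ = Σ_s k_s τ_s`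
with `k_s ∈ ℕ` and `Σ_s k_s = r`.  This is how the hypothesis is encoded.
-/

/-- `fwQ i` is the coordinate vector of the `i`-th fundamental dominant weight
`λ_i` of `B_n`, in the basis of fundamental dominant weights. -/
def fwQ (i : ℕ) : ℕ → ℚ := fun j => if j = i then 1 else 0

/-- The weights `τ_s` (`s = 1,…,2n−1`) of the tangent bundle of the quadric
`Q^{2n−1} = Spin(2n+1)/P₁`, written in coordinates with respect to the
fundamental dominant weights of `B_n`:
`τ_s = λ₁ + λ_s − λ_{s+1}` for `s = 1,…,n−2`, `τ_{n−1} = λ₁ + λ_{n−1} − 2λ_n`,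
`τ_n = λ₁`, `τ_s = λ₁ − λ_{s−n} + λ_{s−n+1}` for `s = n+1,…,2n−2`, and
`τ_{2n−1} = λ₁ − λ_{n−1} + 2λ_n`. -/
def oddQuadricTangentWeight (n s : ℕ) : ℕ → ℚ :=
  if s ≤ n - 2 then fwQ 1 + fwQ s - fwQ (s + 1)
  else if s = n - 1 then fwQ 1 + fwQ (n - 1) - 2 • fwQ n
  else if s = n then fwQ 1
  else if s ≤ 2 * n - 2 then fwQ 1 - fwQ (s - n) + fwQ (s - n + 1)
  else fwQ 1 - fwQ (n - 1) + 2 • fwQ n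

def Lfun (n : ℕ) (w : ℕ → ℚ) : ℚ :=
  w 1 + (∑ i ∈ Finset.Icc 2 (n - 1), w i) + w n / 2

lemma Lfun_add (n : ℕ) (w v : ℕ → ℚ) : Lfun n (w + v) = Lfun n w + Lfun n v := by
  simp only [Lfun, Pi.add_apply, Finset.sum_add_distrib]; ring

lemma Lfun_sub (n : ℕ) (w v : ℕ → ℚ) : Lfun n (w - v) = Lfun n w - Lfun n v := by
  simp only [Lfun, Pi.sub_apply, Finset.sum_sub_distrib]; ring

lemma Lfun_nsmul (n c : ℕ) (w : ℕ → ℚ) : Lfun n (c • w) = c * Lfun n w := by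
  simp only [Lfun, Pi.smul_apply, nsmul_eq_mul, ← Finset.mul_sum]; ring

lemma Lfun_fwQ (n i : ℕ) (hn : 2 ≤ n) (hi1 : 1 ≤ i) (hi2 : i ≤ n - 1) :
    Lfun n (fwQ i) = 1 := by
  simp only [Lfun, fwQ, Finset.sum_ite_eq' (Finset.Icc 2 (n-1)) i (fun _ => (1:ℚ)),
    Finset.mem_Icc]
  split_ifs <;> first | (exfalso; omega) | norm_num

lemma Lfun_fwQ_n (n : ℕ) (hn : 2 ≤ n) : Lfun n (fwQ n) = 1 / 2 := by
  simp only [Lfun, fwQ, Finset.sum_ite_eq' (Finset.Icc 2 (n-1)) n (fun _ => (1:ℚ)),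
    Finset.mem_Icc]
  split_ifs <;> first | (exfalso; omega) | norm_num

lemma Lfun_tangent (n s : ℕ) (hn : 2 ≤ n) (hs1 : 1 ≤ s) (hs2 : s ≤ 2 * n - 1) :
    Lfun n (oddQuadricTangentWeight n s) = 1 := by
  unfold oddQuadricTangentWeight
  split_ifs with h1 h2 h3 h4
  · rw [Lfun_sub, Lfun_add, Lfun_fwQ n 1 hn le_rfl (by omega),
      Lfun_fwQ n s hn hs1 (by omega), Lfun_fwQ n (s+1) hn (by omega) (by omega)]
    norm_num
  · rw [Lfun_sub, Lfun_add, Lfun_nsmul, Lfun_fwQ n 1 hn le_rfl (by omega),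
      Lfun_fwQ n (n-1) hn (by omega) (by omega), Lfun_fwQ_n n hn]
    norm_num
  · exact Lfun_fwQ n 1 hn le_rfl (by omega)
  · rw [Lfun_add, Lfun_sub, Lfun_fwQ n 1 hn le_rfl (by omega),
      Lfun_fwQ n (s-n) hn (by omega) (by omega),
      Lfun_fwQ n (s-n+1) hn (by omega) (by omega)]
    norm_num
  · rw [Lfun_add, Lfun_sub, Lfun_nsmul, Lfun_fwQ n 1 hn le_rfl (by omega),
      Lfun_fwQ n (n-1) hn (by omega) (by omega), Lfun_fwQ_n n hn]
    norm_num

/-- Lemma `oddQ`.  If `λ = Σ_{i=1}^n a_i λ_i` is the highest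
weight of an irreducible component of `T_X^{⊗r}` on `X = Q^{2n−1}` (`n ≥ 2`) —
so that in particular `λ` is a sum of `r` weights of `T_X`, with multiplicities
`k_s` — then `a₁ = r − Σ_{i=2}^{n−1} a_i − a_n / 2`. -/
theorem oddQuadric_highestWeight_first_coefficient
    (n : ℕ) (hn : 2 ≤ n) (r : ℕ) (a : ℕ → ℚ) (k : ℕ → ℕ)
    (hk : ∑ s ∈ Finset.Icc 1 (2 * n - 1), k s = r)
    (ha : ∀ j : ℕ, a j =
      ∑ s ∈ Finset.Icc 1 (2 * n - 1), (k s : ℚ) * oddQuadricTangentWeight n s j) :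
    a 1 = (r : ℚ) - (∑ i ∈ Finset.Icc 2 (n - 1), a i) - a n / 2 := by
  have key : a 1 + (∑ i ∈ Finset.Icc 2 (n - 1), a i) + a n / 2
      = ∑ s ∈ Finset.Icc 1 (2 * n - 1), (k s : ℚ) * Lfun n (oddQuadricTangentWeight n s) := by
    simp only [ha, Lfun]
    rw [Finset.sum_comm, Finset.sum_div, ← Finset.sum_add_distrib, ← Finset.sum_add_distrib]
    refine Finset.sum_congr rfl fun s hs => ?_
    rw [← Finset.mul_sum]
    ring
  have key2 : ∑ s ∈ Finset.Icc 1 (2 * n - 1), (k s : ℚ) * Lfun n (oddQuadricTangentWeight n s)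
      = (r : ℚ) := by
    rw [Finset.sum_congr rfl fun s hs => by
      rw [Lfun_tangent n s hn (Finset.mem_Icc.mp hs).1 (Finset.mem_Icc.mp hs).2, mul_one]]
    rw [← Nat.cast_sum, hk]
  rw [key2] at key
  linarith
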